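/- Let Γ be a finitely generated group with finite symmetric generating set Q and Z a uniformly recurrent subgroup of Γ. Then Z is generic if and only if for every R > 0 there exists S > 0 such that for every H ∈ Z and all x, y ∈ Γ/H with 0 < d(x,y) ≤ R, the rooted-labeled S-balls around x and around y are not isomorphic. -/

import Mathlib

/-- Conjugation action of a group on its subgroups: `g • H = gHg⁻¹`. -/
def conjSub {Γ : Type*} [Group Γ] (g : Γ) (H : Subgroup Γ) : Subgroup Γ :=
  Subgroup.map (MulAut.conj g).toMonoidHom H

/-- The Chabauty-type topology on `Sub(Γ)`: the topology induced from the product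
topology on `{0,1}^Γ` via `H ↦ (γ ↦ decide (γ ∈ H))`. -/
noncomputable instance chabauty {Γ : Type*} [Group Γ] : TopologicalSpace (Subgroup Γ) :=
  TopologicalSpace.induced
    (fun H (g : Γ) => @decide (g ∈ H) (Classical.dec _)) inferInstance

/-- A uniformly recurrent subgroup: a nonempty, closed, conjugation-invariant subset of
`Sub(Γ)` on which every conjugation orbit is dense. -/
structure IsURS {Γ : Type*} [Group Γ] (Z : Set (Subgroup Γ)) : Prop where
  nonempty : Z.Nonempty
  closed : IsClosed Z
  invariant : ∀ g : Γ, ∀ H ∈ Z, conjSub g H ∈ Z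
  minimal : ∀ H ∈ Z, ∀ K ∈ Z, K ∈ closure {L : Subgroup Γ | ∃ g : Γ, conjSub g H = L}

/-- The Schreier graph of a subgroup `H ≤ Γ` with respect to a generating set `Q`:
vertices are left cosets in `Γ/H`, and `x ~ y` iff some `s ∈ Q` moves one to the other. -/
def schreierGraph {Γ : Type*} [Group Γ] (Q : Finset Γ) (H : Subgroup Γ) :
    SimpleGraph (Γ ⧸ H) where
  Adj x y := x ≠ y ∧ ∃ s ∈ Q, s • x = y ∨ s • y = x
  symm := by
    constructor
    rintro x y ⟨hne, s, hs, h⟩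
    exact ⟨hne.symm, s, hs, h.symm⟩
  loopless := by constructor; rintro x ⟨hne, _⟩; exact hne rfl

/-- The `R`-ball around `x` in the Schreier graph of `H`. -/
def sBall {Γ : Type*} [Group Γ] (Q : Finset Γ) (H : Subgroup Γ) (R : ℕ) (x : Γ ⧸ H) :
    Set (Γ ⧸ H) :=
  {y | (schreierGraph Q H).Reachable x y ∧ (schreierGraph Q H).dist x y ≤ R}

/-- The rooted-labeled `R`-balls around `x ∈ Γ/H` and `y ∈ Γ/H'` are isomorphic:
there is a root-preserving bijection between them commuting with all generator labels. -/
def BallIso {Γ : Type*} [Group Γ] (Q : Finset Γ) (H H' : Subgroup Γ) (R : ℕ)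
    (x : Γ ⧸ H) (y : Γ ⧸ H') : Prop :=
  ∃ φ : (Γ ⧸ H) → (Γ ⧸ H'),
    Set.BijOn φ (sBall Q H R x) (sBall Q H' R y) ∧ φ x = y ∧
    ∀ s ∈ Q, ∀ u ∈ sBall Q H R x, ∀ v ∈ sBall Q H R x, (s • u = v ↔ s • φ u = φ v)

/-!
The `S`-ball around `x ∈ Γ/H` records which words of length at most `S` fix `x`, i.e. the
stabilizer `Stab(x) ∈ Z` on a word ball. If `γ ∉ H` normalizes `H`, right multiplication by `γ`
is a `Γ`-equivariant bijection of `Γ/H` moving `H` to `γH`, so these distinct neighbours have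
isomorphic balls of every radius. Conversely, if for a fixed `R` there are arbitrarily large
isomorphic balls around `x` and `y = γx` with `|γ| ≤ R`, then `Stab(x)` and `γ Stab(x) γ⁻¹`
agree on ever larger word balls; fixing `γ` by pigeonhole, compactness of `Sub(Γ)` and
closedness of `Z` produce `L ∈ Z` normalized by `γ` with `γ ∉ L`.
-/

lemma Set.Finite.exists_mem_forall_of_antitone {α : Type*} {s : Set α} (hs : s.Finite)
    {P : α → ℕ → Prop} (hP : ∀ a, Antitone (P a)) (h : ∀ n, ∃ a ∈ s, P a n) :
    ∃ a ∈ s, ∀ n, P a n := by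
  by_contra! hne
  have hev : ∀ᶠ n in Filter.atTop, ∀ a ∈ s, ¬ P a n := hs.eventually_all.2 fun a ha => by
    obtain ⟨m, hm⟩ := hne a ha
    exact Filter.eventually_atTop.2 ⟨m, fun n hmn hn => hm (hP a hmn hn)⟩
  obtain ⟨n, hn⟩ := hev.exists
  obtain ⟨a, ha, hPa⟩ := h n
  exact hn a ha hPa

section

open MulAction
open scoped Pointwise

variable {Γ : Type*} [Group Γ]

section Topology

-- The map inducing the topology `chabauty`.
noncomputable def subgroupIndicator (H : Subgroup Γ) (g : Γ) : Bool :=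
  @decide (g ∈ H) (Classical.dec _)

lemma continuous_subgroupIndicator_apply (g : Γ) :
    Continuous fun H : Subgroup Γ => subgroupIndicator H g :=
  (continuous_apply g).comp (continuous_induced_dom (f := subgroupIndicator))

lemma isClosed_range_subgroupIndicator : IsClosed (Set.range (subgroupIndicator (Γ := Γ))) := by
  have hrange : Set.range (subgroupIndicator (Γ := Γ)) =
      {f | f 1 = true} ∩ ⋂ a : Γ, ⋂ b : Γ, {f | f a = true → f b = true → f (a * b⁻¹) = true} := by
    ext f
    simp only [Set.mem_range, Set.mem_inter_iff, Set.mem_iInter, Set.mem_ofPred_eq]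
    constructor
    · rintro ⟨H, rfl⟩
      simp only [subgroupIndicator, decide_eq_true_iff]
      exact ⟨H.one_mem, fun a b ha hb => H.mul_mem ha (H.inv_mem hb)⟩
    · rintro ⟨h1, hdiv⟩
      refine ⟨Subgroup.ofDiv {g | f g = true} ⟨1, h1⟩ fun a ha b hb => hdiv a b ha hb, ?_⟩
      ext g
      simp [subgroupIndicator, Subgroup.ofDiv]
  rw [hrange]
  refine .inter ((isClosed_discrete {true}).preimage (continuous_apply (A := fun _ => Bool) 1))
    (isClosed_iInter fun a => isClosed_iInter fun b => ?_)
  exact (isClosed_discrete {p : Bool × Bool × Bool | p.1 = true → p.2.1 = true → p.2.2 = true}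
    ).preimage (by fun_prop : Continuous fun f : Γ → Bool => (f a, f b, f (a * b⁻¹)))

instance : CompactSpace (Subgroup Γ) := by
  refine ⟨(Topology.IsInducing.isCompact_iff ⟨rfl⟩).2 ?_⟩
  rw [Set.image_univ]
  exact isClosed_range_subgroupIndicator.isCompact

lemma isClopen_setOf_mem (g : Γ) : IsClopen {H : Subgroup Γ | g ∈ H} := by
  convert (isClopen_discrete {true}).preimage (continuous_subgroupIndicator_apply g)
  ext H
  simp [subgroupIndicator]

lemma isClosed_setOf_mem_iff_mem (g g' : Γ) : IsClosed {H : Subgroup Γ | g ∈ H ↔ g' ∈ H} := by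
  simpa [subgroupIndicator] using
    isClosed_eq (continuous_subgroupIndicator_apply g) (continuous_subgroupIndicator_apply g')

end Topology

lemma mem_conjSub {a g : Γ} {H : Subgroup Γ} : g ∈ conjSub a H ↔ a⁻¹ * g * a ∈ H := by
  rw [conjSub, Subgroup.mem_map_equiv, MulAut.conj_symm_apply]

lemma conjSub_eq_self_iff {γ : Γ} {H : Subgroup Γ} :
    conjSub γ H = H ↔ γ ∈ Subgroup.normalizer (H : Set Γ) :=
  Subgroup.mem_normalizer_iff_map_conj_eq.symm

lemma stabilizer_smul_eq_conjSub {H : Subgroup Γ} (g : Γ) (x : Γ ⧸ H) :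
    stabilizer Γ (g • x) = conjSub g (stabilizer Γ x) :=
  stabilizer_smul_eq_stabilizer_map_conj g x

lemma stabilizer_mk_eq_conjSub (H : Subgroup Γ) (a : Γ) :
    stabilizer Γ (a : Γ ⧸ H) = conjSub a H := by
  have hmk : (a : Γ ⧸ H) = a • ((1 : Γ) : Γ ⧸ H) := by
    rw [MulAction.Quotient.smul_coe, smul_eq_mul, mul_one]
  rw [hmk, stabilizer_smul_eq_conjSub, stabilizer_quotient]

lemma IsURS.stabilizer_mem {Z : Set (Subgroup Γ)} (hZ : IsURS Z) {H : Subgroup Γ} (hH : H ∈ Z)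
    (x : Γ ⧸ H) : stabilizer Γ x ∈ Z := by
  obtain ⟨a, rfl⟩ := QuotientGroup.mk_surjective x
  rw [stabilizer_mk_eq_conjSub]
  exact hZ.invariant a H hH

def wordBall (Q : Finset Γ) (n : ℕ) : Set Γ := insert 1 (Q : Set Γ) ^ n

section wordBall
variable (Q : Finset Γ)

lemma wordBall_mono : Monotone (wordBall Q) := fun _ _ h =>
  Set.pow_subset_pow_right (Set.mem_insert 1 _) h

lemma finite_wordBall (n : ℕ) : (wordBall Q n).Finite := by
  classical
  simpa only [wordBall, ← Finset.coe_insert, ← Finset.coe_pow] using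
    ((insert 1 Q) ^ n).finite_toSet

lemma exists_mem_wordBall (hgen : Subgroup.closure (Q : Set Γ) = ⊤) (hsym : ∀ s ∈ Q, s⁻¹ ∈ Q)
    (g : Γ) : ∃ n, g ∈ wordBall Q n := by
  have hg : g ∈ Subgroup.closure (Q : Set Γ) := hgen ▸ Subgroup.mem_top g
  induction hg using Subgroup.closure_induction with
  | mem s hs => exact ⟨1, by simp [wordBall, hs]⟩
  | one => exact ⟨0, by simp [wordBall]⟩
  | mul a b _ _ iha ihb =>
    obtain ⟨m, ha⟩ := iha
    obtain ⟨n, hb⟩ := ihb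
    exact ⟨m + n, by rw [wordBall, pow_add]; exact Set.mul_mem_mul ha hb⟩
  | inv a _ iha =>
    obtain ⟨n, ha⟩ := iha
    have hQ : (Q : Set Γ)⁻¹ = Q := Set.Subset.antisymm
      (fun s hs => by simpa using hsym _ hs) (fun s hs => by simpa using hsym s hs)
    refine ⟨n, ?_⟩
    rw [wordBall, ← inv_inv (insert 1 (Q : Set Γ)), Set.inv_insert, inv_one, hQ, inv_pow]
    exact Set.inv_mem_inv.mpr ha
end wordBall


section Schreier
variable (Q : Finset Γ) {H H' : Subgroup Γ}

lemma mem_sBall_iff_exists_walk {R : ℕ} {x y : Γ ⧸ H} :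
    y ∈ sBall Q H R x ↔ ∃ p : (schreierGraph Q H).Walk x y, p.length ≤ R := by
  constructor
  · rintro ⟨hr, hd⟩
    obtain ⟨p, hp⟩ := hr.exists_walk_length_eq_dist
    exact ⟨p, hp ▸ hd⟩
  · rintro ⟨p, hp⟩
    exact ⟨p.reachable, (SimpleGraph.dist_le p).trans hp⟩

lemma mem_sBall_self (R : ℕ) (x : Γ ⧸ H) : x ∈ sBall Q H R x :=
  (mem_sBall_iff_exists_walk Q).2 ⟨.nil, Nat.zero_le R⟩

lemma schreierGraph_adj_of_smul_ne {s : Γ} (hs : s ∈ Q) {x : Γ ⧸ H} (hsx : s • x ≠ x) :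
    (schreierGraph Q H).Adj x (s • x) :=
  ⟨hsx.symm, s, hs, .inl rfl⟩

lemma exists_smul_eq_of_adj (hsym : ∀ s ∈ Q, s⁻¹ ∈ Q) {x y : Γ ⧸ H}
    (h : (schreierGraph Q H).Adj x y) : ∃ s ∈ Q, s • x = y := by
  obtain ⟨-, s, hs, hxy | hyx⟩ := h
  · exact ⟨s, hs, hxy⟩
  · exact ⟨s⁻¹, hsym s hs, inv_smul_eq_iff.2 hyx.symm⟩

lemma smul_mem_sBall {n : ℕ} {w : Γ} (hw : w ∈ wordBall Q n) (x : Γ ⧸ H) :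
    w • x ∈ sBall Q H n x := by
  induction n generalizing w x with
  | zero =>
    obtain rfl : w = 1 := by simpa [wordBall] using hw
    rw [one_smul]
    exact mem_sBall_self Q 0 x
  | succ n ih =>
    rw [wordBall, pow_succ] at hw
    obtain ⟨w', hw', s, hs, rfl⟩ := Set.mem_mul.mp hw
    obtain ⟨p, hp⟩ := (mem_sBall_iff_exists_walk Q).1 (ih hw' (s • x))
    rw [mul_smul, mem_sBall_iff_exists_walk]
    by_cases hsx : s • x = x
    · exact ⟨p.copy hsx rfl, by simpa using hp.trans n.le_succ⟩
    · have hsQ : s ∈ Q := by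
        rcases hs with rfl | hs
        · exact absurd (one_smul Γ x) hsx
        · exact hs
      exact ⟨.cons (schreierGraph_adj_of_smul_ne Q hsQ hsx) p, by simpa using hp⟩

lemma exists_mem_wordBall_smul_eq (hsym : ∀ s ∈ Q, s⁻¹ ∈ Q) {x y : Γ ⧸ H}
    (p : (schreierGraph Q H).Walk x y) : ∃ w ∈ wordBall Q p.length, w • x = y := by
  induction p with
  | nil => exact ⟨1, by simp [wordBall], one_smul Γ _⟩
  | cons h p ih =>
    obtain ⟨s, hs, rfl⟩ := exists_smul_eq_of_adj Q hsym h
    obtain ⟨w, hw, rfl⟩ := ih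
    refine ⟨w * s, ?_, mul_smul w s _⟩
    rw [SimpleGraph.Walk.length_cons, wordBall, pow_succ]
    exact Set.mul_mem_mul hw (Set.mem_insert_of_mem 1 hs)

lemma mem_sBall_iff (hsym : ∀ s ∈ Q, s⁻¹ ∈ Q) {R : ℕ} {x y : Γ ⧸ H} :
    y ∈ sBall Q H R x ↔ ∃ w ∈ wordBall Q R, w • x = y := by
  constructor
  · intro hy
    obtain ⟨p, hp⟩ := (mem_sBall_iff_exists_walk Q).1 hy
    obtain ⟨w, hw, rfl⟩ := exists_mem_wordBall_smul_eq Q hsym p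
    exact ⟨w, wordBall_mono Q hp hw, rfl⟩
  · rintro ⟨w, hw, rfl⟩
    exact smul_mem_sBall Q hw x

lemma BallIso.mem_stabilizer_iff {S : ℕ} {x : Γ ⧸ H} {y : Γ ⧸ H'} (hiso : BallIso Q H H' S x y)
    {w : Γ} (hw : w ∈ wordBall Q S) : w ∈ stabilizer Γ x ↔ w ∈ stabilizer Γ y := by
  obtain ⟨φ, hbij, hroot, hlabel⟩ := hiso
  have hφ : ∀ n ≤ S, ∀ w ∈ wordBall Q n, φ (w • x) = w • y := by
    intro n
    induction n with
    | zero =>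
      intro _ w hw
      obtain rfl : w = 1 := by simpa [wordBall] using hw
      simpa using hroot
    | succ n ih =>
      intro hnS w hw
      obtain ⟨s, hs, w', hw', rfl⟩ := Set.mem_mul.mp (by rwa [wordBall, pow_succ'] at hw)
      rw [mul_smul, mul_smul, ← ih (n.le_succ.trans hnS) w' hw']
      rcases hs with rfl | hs
      · simp only [one_smul]
      · have hmem {m : ℕ} (hm : m ≤ S) {v : Γ} (hv : v ∈ wordBall Q m) :
            v • x ∈ sBall Q H S x :=
          smul_mem_sBall Q (wordBall_mono Q hm hv) x
        refine ((hlabel s hs _ (hmem (n.le_succ.trans hnS) hw') _ ?_).1 rfl).symm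
        rw [← mul_smul]
        exact hmem hnS hw
  rw [MulAction.mem_stabilizer_iff, MulAction.mem_stabilizer_iff, ← hφ S le_rfl w hw, ← hroot]
  exact ⟨congrArg φ, fun h => hbij.injOn (smul_mem_sBall Q hw x) (mem_sBall_self Q S x) h⟩

lemma ballIso_of_injective (hsym : ∀ s ∈ Q, s⁻¹ ∈ Q) (e : Γ ⧸ H →[Γ] Γ ⧸ H')
    (he : Function.Injective e) (S : ℕ) (x : Γ ⧸ H) : BallIso Q H H' S x (e x) := by
  refine ⟨e, ⟨?_, he.injOn, ?_⟩, rfl, fun s _ u _ v _ => ?_⟩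
  · intro u hu
    obtain ⟨w, hw, rfl⟩ := (mem_sBall_iff Q hsym).1 hu
    rw [map_smul]
    exact smul_mem_sBall Q hw _
  · intro v hv
    obtain ⟨w, hw, rfl⟩ := (mem_sBall_iff Q hsym).1 hv
    exact ⟨w • x, smul_mem_sBall Q hw x, map_smul e w x⟩
  · rw [← map_smul, he.eq_iff]

end Schreier

lemma exists_mem_conjSub_eq_self {Z : Set (Subgroup Γ)} (hZ : IsClosed Z) {B : ℕ → Set Γ}
    (hB : Monotone B) (hcover : ∀ g, ∃ n, g ∈ B n) {γ : Γ}
    (h : ∀ n, ∃ K ∈ Z, γ ∉ K ∧ ∀ g ∈ B n, g ∈ conjSub γ K ↔ g ∈ K) :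
    ∃ L ∈ Z, γ ∉ L ∧ conjSub γ L = L := by
  set C : ℕ → Set (Subgroup Γ) := fun n =>
    Z ∩ {K | γ ∉ K} ∩ ⋂ g ∈ B n, {K | g ∈ conjSub γ K ↔ g ∈ K}
  have hclosed (n : ℕ) : IsClosed (C n) := by
    refine (hZ.inter (isClopen_setOf_mem γ).isOpen.isClosed_compl).inter
      (isClosed_biInter fun g _ => ?_)
    simpa only [mem_conjSub] using isClosed_setOf_mem_iff_mem _ g
  have hanti (n : ℕ) : C (n + 1) ⊆ C n :=
    Set.inter_subset_inter_right _ (Set.biInter_subset_biInter_left (hB n.le_succ))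
  have hne (n : ℕ) : (C n).Nonempty := by
    obtain ⟨K, hK, hγK, hagree⟩ := h n
    exact ⟨K, ⟨hK, hγK⟩, Set.mem_iInter₂.2 hagree⟩
  obtain ⟨L, hL⟩ := IsCompact.nonempty_iInter_of_sequence_nonempty_isCompact_isClosed C hanti hne
    (hclosed 0).isCompact hclosed
  obtain ⟨⟨hLZ, hγL⟩, -⟩ := Set.mem_iInter.1 hL 0
  refine ⟨L, hLZ, hγL, Subgroup.ext fun g => ?_⟩
  obtain ⟨n, hn⟩ := hcover g
  exact Set.mem_iInter₂.1 (Set.mem_iInter.1 hL n).2 g hn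

-- Well defined by `MulAction.right_quotientAction`: `(normalizer H).op` acts on `Γ ⧸ H`.
def normalizerRightMul {H : Subgroup Γ} {γ : Γ} (hγ : γ ∈ Subgroup.normalizer (H : Set Γ)) :
    Γ ⧸ H →[Γ] Γ ⧸ H where
  toFun z := (⟨MulOpposite.op γ, hγ⟩ : (Subgroup.normalizer (H : Set Γ)).op) • z
  map_smul' g z := QuotientGroup.induction_on z fun b => congrArg _ (mul_assoc g b γ)

lemma normalizerRightMul_mk {H : Subgroup Γ} {γ : Γ} (hγ : γ ∈ Subgroup.normalizer (H : Set Γ))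
    (b : Γ) : normalizerRightMul hγ (b : Γ ⧸ H) = ((b * γ : Γ) : Γ ⧸ H) :=
  rfl

lemma normalizerRightMul_injective {H : Subgroup Γ} {γ : Γ}
    (hγ : γ ∈ Subgroup.normalizer (H : Set Γ)) : Function.Injective (normalizerRightMul hγ) :=
  MulAction.injective _

theorem ballSeparation_of_generic (Q : Finset Γ) (hgen : Subgroup.closure (Q : Set Γ) = ⊤)
    (hsym : ∀ s ∈ Q, s⁻¹ ∈ Q) {Z : Set (Subgroup Γ)} (hZ : IsURS Z)
    (hgeneric : ∀ H ∈ Z, ∀ γ : Γ, conjSub γ H = H → γ ∈ H) (R : ℕ) :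
    ∃ S : ℕ, 0 < S ∧
      ∀ H ∈ Z, ∀ x y : Γ ⧸ H, x ≠ y → y ∈ sBall Q H R x → ¬ BallIso Q H H S x y := by
  by_contra! hfail
  have hnear (n : ℕ) : ∃ γ ∈ wordBall Q R,
      ∃ K ∈ Z, γ ∉ K ∧ ∀ g ∈ wordBall Q n, g ∈ conjSub γ K ↔ g ∈ K := by
    obtain ⟨H, hH, x, y, hxy, hy, hiso⟩ := hfail (n + 1) n.succ_pos
    obtain ⟨γ, hγ, rfl⟩ := (mem_sBall_iff Q hsym).1 hy
    refine ⟨γ, hγ, stabilizer Γ x, hZ.stabilizer_mem hH x, fun hγx => hxy ?_, fun g hg => ?_⟩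
    · exact (MulAction.mem_stabilizer_iff.1 hγx).symm
    · rw [← stabilizer_smul_eq_conjSub]
      exact (hiso.mem_stabilizer_iff Q (wordBall_mono Q n.le_succ hg)).symm
  have hanti (γ : Γ) :
      Antitone fun n => ∃ K ∈ Z, γ ∉ K ∧ ∀ g ∈ wordBall Q n, g ∈ conjSub γ K ↔ g ∈ K :=
    fun _ _ hmn ⟨K, hK, hγK, hagree⟩ =>
      ⟨K, hK, hγK, fun g hg => hagree g (wordBall_mono Q hmn hg)⟩
  obtain ⟨γ, -, hγ⟩ := (finite_wordBall Q R).exists_mem_forall_of_antitone hanti hnear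
  obtain ⟨L, hL, hγL, hconj⟩ :=
    exists_mem_conjSub_eq_self hZ.closed (wordBall_mono Q) (exists_mem_wordBall Q hgen hsym) hγ
  exact hγL (hgeneric L hL γ hconj)

theorem mem_of_conjSub_eq_self_of_ballSeparation (Q : Finset Γ)
    (hgen : Subgroup.closure (Q : Set Γ) = ⊤) (hsym : ∀ s ∈ Q, s⁻¹ ∈ Q) {H : Subgroup Γ}
    (hsep : ∀ R : ℕ, 0 < R → ∃ S : ℕ,
      ∀ x y : Γ ⧸ H, x ≠ y → y ∈ sBall Q H R x → ¬ BallIso Q H H S x y)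
    {γ : Γ} (hγ : conjSub γ H = H) : γ ∈ H := by
  by_contra hγH
  obtain ⟨n, hn⟩ := exists_mem_wordBall Q hgen hsym γ
  obtain ⟨S, hS⟩ := hsep (n + 1) n.succ_pos
  set e := normalizerRightMul (conjSub_eq_self_iff.1 hγ)
  have he : e ((1 : Γ) : Γ ⧸ H) = γ • ((1 : Γ) : Γ ⧸ H) := by
    rw [normalizerRightMul_mk, MulAction.Quotient.smul_coe, smul_eq_mul, mul_one, one_mul]
  refine hS _ (e (1 : Γ)) ?_ ?_
    (ballIso_of_injective Q hsym e (normalizerRightMul_injective _) S _)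
  · rw [normalizerRightMul_mk, ne_eq, QuotientGroup.eq, inv_one, one_mul, one_mul]
    exact hγH
  · rw [he]
    exact smul_mem_sBall Q (wordBall_mono Q n.le_succ hn) _

end

/-- a URS `Z` is generic (all members self-normalizing) iff for every `R > 0`
there is `S > 0` such that for every `H ∈ Z`, distinct vertices of `Γ/H` at distance at
most `R` have non-isomorphic rooted-labeled `S`-balls. -/
theorem generic_iff_ball_separation
    {Γ : Type*} [Group Γ] (Q : Finset Γ)
    (hgen : Subgroup.closure (Q : Set Γ) = ⊤)
    (hsym : ∀ s ∈ Q, s⁻¹ ∈ Q)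
    (Z : Set (Subgroup Γ)) (hZ : IsURS Z) :
    (∀ H ∈ Z, ∀ γ : Γ, conjSub γ H = H → γ ∈ H) ↔
    (∀ R : ℕ, 0 < R → ∃ S : ℕ, 0 < S ∧
      ∀ H ∈ Z, ∀ x y : Γ ⧸ H, x ≠ y → y ∈ sBall Q H R x → ¬ BallIso Q H H S x y) := by
  refine ⟨fun hgeneric R _ => ballSeparation_of_generic Q hgen hsym hZ hgeneric R,
    fun hsep H hH γ hγ => mem_of_conjSub_eq_self_of_ballSeparation Q hgen hsym ?_ hγ⟩
  intro R hR
  obtain ⟨S, -, hS⟩ := hsep R hR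
  exact ⟨S, hS H hH⟩
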